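/- Let q be a vertex of G and v a vertex of H that is reachable from q in G, and assume: (i) every directed walk from q to v in G contains a vertex of S; (ii) for every directed walk W from q to v in G, the suffix of W beginning at the last occurrence on W of a vertex of S is a walk in H. Take ω(s) = dist_G(q,s) for s ∈ S, and assume additionally that there is a unique directed walk P from q to v in G of total length dist_G(q,v). Then for every s ∈ S: v ∈ Vor(s) if and only if s is the last vertex of S occurring on P; moreover, in that case d^ω(s,v) = dist_G(q,v). -/

import Mathlib

open scoped ENNReal

/-- A finite directed graph on vertex type `V`, with an adjacency relation and
real-valued edge lengths. -/
structure DiGraph (V : Type) where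
  Adj : V → V → Prop
  len : V → V → ℝ

namespace DiGraph

variable {V : Type}

/-- `G.IsWalk a b l` : `l` is (the vertex list of) a directed walk from `a` to `b` in `G`. -/
inductive IsWalk (G : DiGraph V) : V → V → List V → Prop
  | single (a : V) : IsWalk G a a [a]
  | cons {a b c : V} {l : List V} (h : G.Adj a b) (hw : IsWalk G b c l) :
      IsWalk G a c (a :: l)

/-- Total length of a walk given by its vertex list. -/
noncomputable def walkLen (G : DiGraph V) : List V → ℝ
  | a :: b :: l => G.len a b + G.walkLen (b :: l)
  | _ => 0

/-- `dist G a b` : the infimum, in `ℝ≥0∞`, of the lengths of directed walks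
from `a` to `b` (`∞` if there is no such walk). -/
noncomputable def dist (G : DiGraph V) (a b : V) : ℝ≥0∞ :=
  sInf {x : ℝ≥0∞ | ∃ l, G.IsWalk a b l ∧ x = ENNReal.ofReal (G.walkLen l)}

/-- The additively weighted distance `d^ω(s,v) = ω(s) + dist_H(s,v)`, valued in `EReal`
so that arbitrary (possibly infinite) additive weights can be accommodated. -/
noncomputable def dOm (H : DiGraph V) (ω : V → EReal) (s v : V) : EReal :=
  ω s + ((H.dist s v : ℝ≥0∞) : EReal)

/-- The Voronoi cell of a site `s ∈ S`: the set of vertices `v` of `H` such that for all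
`s' ∈ S` with `s' ≠ s`, the pair `(d^ω(s,v), −ω(s))` is lexicographically strictly smaller
than `(d^ω(s',v), −ω(s'))`. -/
def Vor (H : DiGraph V) (HV : Set V) (S : Finset V) (ω : V → EReal) (s : V) : Set V :=
  {v ∈ HV | ∀ s' ∈ S, s' ≠ s →
    dOm H ω s v < dOm H ω s' v ∨ (dOm H ω s v = dOm H ω s' v ∧ ω s' < ω s)}

end DiGraph

/-! With `ω = dist_G(q, ·)`, the triangle inequality and `H ⊆ G` give
`d^ω(s, v) ≥ dist_G(q, v)` for every site `s`, with equality at the last `S`-vertex `s₀` of `P`,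
since by (ii) the suffix of `P` from `s₀` is a walk in `H`. If another site `s` also attains
equality, concatenating a shortest `q`–`s` walk in `G` with a shortest `s`–`v` walk in `H` gives
a shortest `q`–`v` walk, which must be `P`. On `P` the site `s` comes before `s₀`, so `s₀` is
strictly closer to `v` than `s` is, i.e. `dist_G(q, s) < dist_G(q, s₀)`, and `s` loses the
tie-break. Hence `s₀` is the unique lexicographic minimiser. -/

namespace List

variable {V : Type} {S : Set V}

theorem exists_last_mem : ∀ {l : List V}, (∃ s ∈ S, s ∈ l) →
    ∃ l₁ s l₂, l = l₁ ++ s :: l₂ ∧ s ∈ S ∧ ∀ x ∈ l₂, x ∉ S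
  | [], ⟨_, _, h⟩ => absurd h not_mem_nil
  | a :: l, ⟨s, hs, hsl⟩ => by
    by_cases hl : ∃ s ∈ S, s ∈ l
    · obtain ⟨l₁, t, l₂, rfl, ht, hl₂⟩ := exists_last_mem hl
      exact ⟨a :: l₁, t, l₂, rfl, ht, hl₂⟩
    · refine ⟨[], a, l, rfl, ?_, fun x hx hxS => hl ⟨x, hxS, hx⟩⟩
      rcases mem_cons.1 hsl with rfl | hsl
      · exact hs
      · exact absurd ⟨s, hs, hsl⟩ hl

/-- An element of `S` other than the last one occurs before it. -/
theorem exists_eq_append_of_append_cons_eq {l₁ l₂ m₁ m₂ : List V} {s t : V}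
    (h : l₁ ++ s :: l₂ = m₁ ++ t :: m₂) (hs : s ∈ S) (hst : s ≠ t)
    (hm₂ : ∀ x ∈ m₂, x ∉ S) : ∃ m, l₂ = m ++ t :: m₂ := by
  rcases append_eq_append_iff.1 h with ⟨_ | ⟨_, m⟩, -, h'⟩ | ⟨_ | ⟨_, m⟩, -, h'⟩
  · exact absurd (cons_eq_cons.1 h').1 hst
  · exact ⟨m, (cons_eq_cons.1 h').2⟩
  · exact absurd (cons_eq_cons.1 h').1 hst.symm
  · obtain ⟨-, rfl⟩ := cons_eq_cons.1 h'
    exact absurd hs (hm₂ s (by simp))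

theorem eq_of_append_cons_eq_of_last_mem {l₁ l₂ m₁ m₂ : List V} {s t : V}
    (h : l₁ ++ s :: l₂ = m₁ ++ t :: m₂) (hs : s ∈ S) (ht : t ∈ S)
    (hl₂ : ∀ x ∈ l₂, x ∉ S) (hm₂ : ∀ x ∈ m₂, x ∉ S) : s = t := by
  by_contra hst
  obtain ⟨m, rfl⟩ := exists_eq_append_of_append_cons_eq h hs hst hm₂
  exact hl₂ t (by simp) ht

end List

namespace DiGraph

variable {V : Type} {G H : DiGraph V} {a b c x : V} {l l₁ l₂ : List V}

theorem IsWalk.eq_cons (h : G.IsWalk a b l) : ∃ t, l = a :: t := by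
  cases h <;> exact ⟨_, rfl⟩

theorem IsWalk.eq_concat (h : G.IsWalk a b l) : ∃ t, l = t ++ [b] := by
  induction h with
  | single a => exact ⟨[], rfl⟩
  | cons _ _ ih => obtain ⟨t, rfl⟩ := ih; exact ⟨_ :: t, rfl⟩

theorem IsWalk.head_eq (h : G.IsWalk a b (c :: l)) : a = c := by
  cases h <;> rfl

theorem isWalk_singleton_iff : G.IsWalk a b [c] ↔ a = c ∧ b = c := by
  constructor
  · rintro (_ | ⟨_, hw⟩)
    · exact ⟨rfl, rfl⟩
    · obtain ⟨_, h⟩ := hw.eq_cons; cases h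
  · rintro ⟨rfl, rfl⟩
    exact .single _

theorem isWalk_cons_cons_iff {d : V} :
    G.IsWalk a b (c :: d :: l) ↔ a = c ∧ G.Adj c d ∧ G.IsWalk d b (d :: l) := by
  constructor
  · rintro (_ | ⟨hadj, hw⟩)
    obtain rfl := hw.head_eq
    exact ⟨rfl, hadj, hw⟩
  · rintro ⟨rfl, hadj, hw⟩
    exact .cons hadj hw

theorem isWalk_append_iff :
    G.IsWalk a b (l₁ ++ x :: l₂) ↔ G.IsWalk a x (l₁ ++ [x]) ∧ G.IsWalk x b (x :: l₂) := by
  induction l₁ generalizing a with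
  | nil =>
    rw [List.nil_append, List.nil_append, isWalk_singleton_iff]
    exact ⟨fun h => ⟨⟨h.head_eq, rfl⟩, h.head_eq ▸ h⟩, fun ⟨⟨h, _⟩, hw⟩ => h ▸ hw⟩
  | cons c l₁ ih =>
    cases l₁ with
    | nil =>
      simp only [List.cons_append, List.nil_append, isWalk_cons_cons_iff, isWalk_singleton_iff]
      tauto
    | cons d l₁ =>
      simp only [List.cons_append] at ih ⊢
      rw [isWalk_cons_cons_iff, isWalk_cons_cons_iff, ih, and_assoc, and_assoc]

theorem IsWalk.mono (hsub : ∀ a b, H.Adj a b → G.Adj a b) (h : H.IsWalk a b l) :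
    G.IsWalk a b l := by
  induction h with
  | single a => exact .single a
  | cons h _ ih => exact .cons (hsub _ _ h) ih

theorem walkLen_cons_cons : G.walkLen (a :: b :: l) = G.len a b + G.walkLen (b :: l) := rfl

theorem walkLen_eq_of_len_eq (hlen : H.len = G.len) : ∀ l, H.walkLen l = G.walkLen l
  | [] | [_] => rfl
  | a :: b :: l => by
    rw [walkLen_cons_cons, walkLen_cons_cons, hlen, walkLen_eq_of_len_eq hlen (b :: l)]

theorem walkLen_append (G : DiGraph V) (x : V) (l₂ : List V) :
    ∀ l₁, G.walkLen (l₁ ++ x :: l₂) = G.walkLen (l₁ ++ [x]) + G.walkLen (x :: l₂)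
  | [] => by simp [walkLen]
  | [a] => by simp [walkLen]
  | a :: b :: l₁ => by
    have ih := walkLen_append G x l₂ (b :: l₁)
    simp only [List.cons_append, walkLen_cons_cons] at ih ⊢
    rw [ih, add_assoc]

theorem IsWalk.walkLen_nonneg (hnonneg : ∀ a b, G.Adj a b → 0 ≤ G.len a b)
    (h : G.IsWalk a b l) : 0 ≤ G.walkLen l := by
  induction h with
  | single a => exact le_rfl
  | cons hadj hw ih =>
    obtain ⟨t, rfl⟩ := hw.eq_cons
    exact add_nonneg (hnonneg _ _ hadj) ih

theorem IsWalk.walkLen_pos (hpos : ∀ a b, G.Adj a b → 0 < G.len a b)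
    (h : G.IsWalk a b l) (hne : a ≠ b) : 0 < G.walkLen l := by
  cases h with
  | single a => exact absurd rfl hne
  | cons hadj hw =>
    obtain ⟨t, rfl⟩ := hw.eq_cons
    exact add_pos_of_pos_of_nonneg (hpos _ _ hadj) (hw.walkLen_nonneg fun a b h => (hpos a b h).le)

theorem ofReal_walkLen_append (hnonneg : ∀ a b, G.Adj a b → 0 ≤ G.len a b)
    (h₁ : G.IsWalk a x (l₁ ++ [x])) (h₂ : G.IsWalk x b (x :: l₂)) :
    ENNReal.ofReal (G.walkLen (l₁ ++ x :: l₂)) =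
      ENNReal.ofReal (G.walkLen (l₁ ++ [x])) + ENNReal.ofReal (G.walkLen (x :: l₂)) := by
  rw [walkLen_append, ENNReal.ofReal_add (h₁.walkLen_nonneg hnonneg) (h₂.walkLen_nonneg hnonneg)]

theorem IsWalk.dist_le (h : G.IsWalk a b l) : G.dist a b ≤ ENNReal.ofReal (G.walkLen l) :=
  sInf_le ⟨l, h, rfl⟩

theorem exists_isWalk_of_dist_ne_top (h : G.dist a b ≠ ⊤) : ∃ l, G.IsWalk a b l := by
  by_contra hno
  refine h (sInf_eq_top.2 ?_)
  rintro _ ⟨l, hl, -⟩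
  exact absurd ⟨l, hl⟩ hno

/-- Cutting out the cycle at a repeated vertex does not increase the length. -/
theorem IsWalk.exists_nodup (hnonneg : ∀ a b, G.Adj a b → 0 ≤ G.len a b)
    (h : G.IsWalk a b l) : ∃ l', G.IsWalk a b l' ∧ l'.Nodup ∧ G.walkLen l' ≤ G.walkLen l := by
  induction h with
  | single a => exact ⟨[a], .single a, List.nodup_singleton a, le_rfl⟩
  | @cons a b c l hadj hw ih =>
    obtain ⟨l', hw', hnd, hle⟩ := ih
    obtain ⟨t, rfl⟩ := hw.eq_cons
    by_cases hmem : a ∈ l'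
    · obtain ⟨m₁, m₂, rfl⟩ := List.append_of_mem hmem
      obtain ⟨hpre, hsuf⟩ := isWalk_append_iff.1 hw'
      refine ⟨a :: m₂, hsuf, hnd.sublist (List.suffix_append m₁ (a :: m₂)).sublist, ?_⟩
      rw [walkLen_cons_cons]
      linarith [walkLen_append G a m₂ m₁, hpre.walkLen_nonneg hnonneg, hnonneg _ _ hadj]
    · obtain ⟨t', rfl⟩ := hw'.eq_cons
      refine ⟨a :: b :: t', .cons hadj hw', List.nodup_cons.2 ⟨hmem, hnd⟩, ?_⟩
      rw [walkLen_cons_cons, walkLen_cons_cons]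
      linarith

theorem exists_isWalk_ofReal_walkLen_eq_dist [Finite V]
    (hnonneg : ∀ a b, G.Adj a b → 0 ≤ G.len a b) (h : G.dist a b ≠ ⊤) :
    ∃ l, G.IsWalk a b l ∧ ENNReal.ofReal (G.walkLen l) = G.dist a b := by
  have := Fintype.ofFinite V
  have hfin : {l | G.IsWalk a b l ∧ l.Nodup}.Finite :=
    (List.finite_length_le V (Fintype.card V)).subset fun l hl => hl.2.length_le_card
  obtain ⟨l, hl⟩ := exists_isWalk_of_dist_ne_top h
  obtain ⟨l', hl', hnd, -⟩ := hl.exists_nodup hnonneg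
  obtain ⟨l₀, ⟨hl₀, -⟩, hmin⟩ := Set.exists_min_image _ G.walkLen hfin ⟨l', hl', hnd⟩
  refine ⟨l₀, hl₀, le_antisymm ?_ hl₀.dist_le⟩
  refine le_sInf ?_
  rintro _ ⟨l, hl, rfl⟩
  obtain ⟨l', hl', hnd, hle⟩ := hl.exists_nodup hnonneg
  exact ENNReal.ofReal_le_ofReal ((hmin l' ⟨hl', hnd⟩).trans hle)

theorem dist_triangle [Finite V] (hnonneg : ∀ a b, G.Adj a b → 0 ≤ G.len a b) (a x b : V) :
    G.dist a b ≤ G.dist a x + G.dist x b := by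
  by_cases h₁ : G.dist a x = ⊤
  · simp [h₁]
  by_cases h₂ : G.dist x b = ⊤
  · simp [h₂]
  obtain ⟨l₁, hl₁, hlen₁⟩ := exists_isWalk_ofReal_walkLen_eq_dist hnonneg h₁
  obtain ⟨l₂, hl₂, hlen₂⟩ := exists_isWalk_ofReal_walkLen_eq_dist hnonneg h₂
  obtain ⟨u, rfl⟩ := hl₁.eq_concat
  obtain ⟨t, rfl⟩ := hl₂.eq_cons
  calc G.dist a b ≤ ENNReal.ofReal (G.walkLen (u ++ x :: t)) :=
        (isWalk_append_iff.2 ⟨hl₁, hl₂⟩).dist_le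
    _ = G.dist a x + G.dist x b := by rw [ofReal_walkLen_append hnonneg hl₁ hl₂, hlen₁, hlen₂]

theorem dist_le_dist_of_subgraph (hsub : ∀ a b, H.Adj a b → G.Adj a b) (hlen : H.len = G.len)
    (a b : V) : G.dist a b ≤ H.dist a b := by
  refine le_sInf ?_
  rintro _ ⟨l, hl, rfl⟩
  rw [walkLen_eq_of_len_eq hlen]
  exact (hl.mono hsub).dist_le

theorem dist_lt_dist_of_mem_shortest (hpos : ∀ a b, G.Adj a b → 0 < G.len a b)
    (hw : G.IsWalk a b (l₁ ++ x :: l₂))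
    (hshort : ENNReal.ofReal (G.walkLen (l₁ ++ x :: l₂)) = G.dist a b) (hne : a ≠ x) :
    G.dist x b < G.dist a b := by
  obtain ⟨h₁, h₂⟩ := isWalk_append_iff.1 hw
  calc G.dist x b ≤ ENNReal.ofReal (G.walkLen (x :: l₂)) := h₂.dist_le
    _ < ENNReal.ofReal (G.walkLen (l₁ ++ x :: l₂)) := by
      rw [ENNReal.ofReal_lt_ofReal_iff_of_nonneg (h₂.walkLen_nonneg fun a b h => (hpos a b h).le),
        walkLen_append]
      exact lt_add_of_pos_left _ (h₁.walkLen_pos hpos hne)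
    _ = G.dist a b := hshort

theorem mem_Vor_iff_eq {HV : Set V} {S : Finset V} {ω : V → EReal} {v s₀ s : V}
    (hv : v ∈ HV) (hs₀ : s₀ ∈ S) (hmin : ∀ s ∈ S, dOm H ω s₀ v ≤ dOm H ω s v)
    (htie : ∀ s ∈ S, s ≠ s₀ → dOm H ω s v = dOm H ω s₀ v → ω s < ω s₀) (hs : s ∈ S) :
    v ∈ Vor H HV S ω s ↔ s = s₀ := by
  constructor
  · rintro ⟨-, hvor⟩
    by_contra hne
    rcases hvor s₀ hs₀ (Ne.symm hne) with hlt | ⟨heq, hlt⟩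
    · exact (hmin s hs).not_gt hlt
    · exact (htie s hs hne heq).asymm hlt
  · rintro rfl
    refine ⟨hv, fun s' hs' hne => ?_⟩
    rcases (hmin s' hs').lt_or_eq with hlt | heq
    · exact Or.inl hlt
    · exact Or.inr ⟨heq, htie s' hs' hne heq.symm⟩

section SubgraphDistance

variable [Finite V] (hsub : ∀ a b, H.Adj a b → G.Adj a b) (hlen : H.len = G.len)
include hsub hlen

theorem dist_le_dist_add_dist (hnonneg : ∀ a b, G.Adj a b → 0 ≤ G.len a b) (q s v : V) :
    G.dist q v ≤ G.dist q s + H.dist s v := by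
  calc G.dist q v ≤ G.dist q s + G.dist s v := dist_triangle hnonneg q s v
    _ ≤ G.dist q s + H.dist s v := by gcongr; exact dist_le_dist_of_subgraph hsub hlen s v

theorem dist_add_dist_eq_of_isWalk_append (hnonneg : ∀ a b, G.Adj a b → 0 ≤ G.len a b)
    {q s v : V} {p₁ p₂ : List V} (hP : G.IsWalk q v (p₁ ++ s :: p₂))
    (hPH : H.IsWalk s v (s :: p₂))
    (hshort : ENNReal.ofReal (G.walkLen (p₁ ++ s :: p₂)) = G.dist q v) :
    G.dist q s + H.dist s v = G.dist q v := by
  refine le_antisymm ?_ (dist_le_dist_add_dist hsub hlen hnonneg q s v)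
  obtain ⟨h₁, h₂⟩ := isWalk_append_iff.1 hP
  calc G.dist q s + H.dist s v
      ≤ ENNReal.ofReal (G.walkLen (p₁ ++ [s])) + ENNReal.ofReal (G.walkLen (s :: p₂)) := by
        rw [← walkLen_eq_of_len_eq hlen (s :: p₂)]
        exact add_le_add h₁.dist_le hPH.dist_le
    _ = G.dist q v := by rw [← ofReal_walkLen_append hnonneg h₁ h₂, hshort]

theorem dist_lt_dist_of_dist_add_dist_eq (hpos : ∀ a b, G.Adj a b → 0 < G.len a b)
    {S : Set V} {q v s s₀ : V} {p₁ p₂ : List V}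
    (huniq : ∀ l, G.IsWalk q v l → ENNReal.ofReal (G.walkLen l) = G.dist q v →
      l = p₁ ++ s₀ :: p₂)
    (hp₂ : ∀ x ∈ p₂, x ∉ S) (hs : s ∈ S) (hne : s ≠ s₀) (hfin : G.dist q v ≠ ⊤)
    (hs₀ : G.dist q s₀ + H.dist s₀ v = G.dist q v)
    (hsum : G.dist q s + H.dist s v = G.dist q v) :
    G.dist q s < G.dist q s₀ := by
  have hposH : ∀ a b, H.Adj a b → 0 < H.len a b := fun a b h => hlen ▸ hpos a b (hsub a b h)
  have hnonneg : ∀ a b, G.Adj a b → 0 ≤ G.len a b := fun a b h => (hpos a b h).le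
  obtain ⟨W₁, hW₁, hW₁len⟩ := exists_isWalk_ofReal_walkLen_eq_dist hnonneg
    (ne_top_of_le_ne_top hfin (hsum ▸ le_self_add))
  obtain ⟨W₂, hW₂, hW₂len⟩ := exists_isWalk_ofReal_walkLen_eq_dist (fun a b h => (hposH a b h).le)
    (ne_top_of_le_ne_top hfin (hsum ▸ le_add_self))
  obtain ⟨u, rfl⟩ := hW₁.eq_concat
  obtain ⟨t, rfl⟩ := hW₂.eq_cons
  have hW₂G := hW₂.mono hsub
  have hP : u ++ s :: t = p₁ ++ s₀ :: p₂ := by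
    refine huniq _ (isWalk_append_iff.2 ⟨hW₁, hW₂G⟩) ?_
    rw [ofReal_walkLen_append hnonneg hW₁ hW₂G, hW₁len, ← walkLen_eq_of_len_eq hlen, hW₂len, hsum]
  obtain ⟨m, rfl⟩ := List.exists_eq_append_of_append_cons_eq hP hs hne hp₂
  have hcloser : H.dist s₀ v < H.dist s v :=
    dist_lt_dist_of_mem_shortest hposH (l₁ := s :: m) hW₂ hW₂len hne
  have hs₀fin : H.dist s₀ v ≠ ⊤ := ne_top_of_le_ne_top hfin (hs₀ ▸ le_add_self)
  refine (ENNReal.add_lt_add_iff_right hs₀fin).1 ?_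
  calc G.dist q s + H.dist s₀ v < G.dist q s + H.dist s v :=
        ENNReal.add_lt_add_left (ne_top_of_le_ne_top hfin (hsum ▸ le_self_add)) hcloser
    _ = G.dist q s₀ + H.dist s₀ v := hsum.trans hs₀.symm

end SubgraphDistance

end DiGraph

theorem stmt1_general {V : Type} [Fintype V] (G H : DiGraph V) (HV : Set V) (S : Finset V)
    (hpos : ∀ a b, G.Adj a b → 0 < G.len a b)
    (hsub : ∀ a b, H.Adj a b → G.Adj a b) (hlen : H.len = G.len)
    (q v : V) (hv : v ∈ HV)
    (hi : ∀ l, G.IsWalk q v l → ∃ s ∈ S, s ∈ l)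
    (hii : ∀ l, G.IsWalk q v l → ∀ l₁ s l₂, l = l₁ ++ s :: l₂ → s ∈ S →
      (∀ x ∈ l₂, x ∉ (S : Set V)) → H.IsWalk s v (s :: l₂))
    (ω : V → EReal) (hω : ∀ x, ω x = ((G.dist q x : ℝ≥0∞) : EReal))
    (P : List V) (hP : G.IsWalk q v P)
    (hPlen : ENNReal.ofReal (G.walkLen P) = G.dist q v)
    (hPuniq : ∀ l, G.IsWalk q v l → ENNReal.ofReal (G.walkLen l) = G.dist q v → l = P) :
    ∀ s ∈ S,
      (v ∈ DiGraph.Vor H HV S ω s ↔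
        ∃ l₁ l₂, P = l₁ ++ s :: l₂ ∧ ∀ x ∈ l₂, x ∉ (S : Set V)) ∧
      (v ∈ DiGraph.Vor H HV S ω s →
        DiGraph.dOm H ω s v = ((G.dist q v : ℝ≥0∞) : EReal)) := by
  intro s hs
  have hnonneg : ∀ a b, G.Adj a b → 0 ≤ G.len a b := fun a b h => (hpos a b h).le
  have hdOm : ∀ s, DiGraph.dOm H ω s v = ((G.dist q s + H.dist s v : ℝ≥0∞) : EReal) :=
    fun s => by rw [DiGraph.dOm, hω, EReal.coe_ennreal_add]
  obtain ⟨p₁, s₀, p₂, rfl, hs₀, hp₂⟩ := List.exists_last_mem (hi P hP)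
  have hs₀dist : G.dist q s₀ + H.dist s₀ v = G.dist q v :=
    DiGraph.dist_add_dist_eq_of_isWalk_append hsub hlen hnonneg hP
      (hii _ hP p₁ s₀ p₂ rfl hs₀ hp₂) hPlen
  have hVor : v ∈ DiGraph.Vor H HV S ω s ↔ s = s₀ := by
    refine DiGraph.mem_Vor_iff_eq hv hs₀ (fun s' _ => ?_) (fun s' hs' hne heq => ?_) hs
    · rw [hdOm, hdOm, hs₀dist]
      exact EReal.coe_ennreal_le_coe_ennreal_iff.2
        (DiGraph.dist_le_dist_add_dist hsub hlen hnonneg q s' v)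
    · rw [hdOm, hdOm, hs₀dist, EReal.coe_ennreal_eq_coe_ennreal_iff] at heq
      rw [hω, hω, EReal.coe_ennreal_lt_coe_ennreal_iff]
      exact DiGraph.dist_lt_dist_of_dist_add_dist_eq hsub hlen hpos hPuniq hp₂ hs' hne
        (hPlen ▸ ENNReal.ofReal_ne_top) hs₀dist heq
  have hLast : (∃ l₁ l₂, p₁ ++ s₀ :: p₂ = l₁ ++ s :: l₂ ∧ ∀ x ∈ l₂, x ∉ (S : Set V)) ↔
      s = s₀ := by
    refine ⟨fun ⟨l₁, l₂, h, hl₂⟩ => ?_, fun h => ⟨p₁, p₂, h ▸ rfl, hp₂⟩⟩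
    exact List.eq_of_append_cons_eq_of_last_mem h.symm hs hs₀ hl₂ hp₂
  refine ⟨hVor.trans hLast.symm, fun h => ?_⟩
  rw [hVor.1 h, hdOm, hs₀dist]

/-- With `G, H, HV, S` as usual, `q` a vertex of `G`, `v ∈ HV` reachable
from `q` in `G`, assuming (i) every `q`-`v` walk in `G` meets `S`, (ii) the suffix of any
`q`-`v` walk beginning at the last occurrence of an `S`-vertex is a walk in `H`, and taking
`ω(s) = dist_G(q,s)`, if `P` is the unique shortest walk from `q` to `v` in `G`, then for
every `s ∈ S`: `v ∈ Vor(s)` iff `s` is the last vertex of `S` occurring on `P`; moreover,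
in that case `d^ω(s,v) = dist_G(q,v)`. -/
theorem stmt1 {V : Type} [Fintype V] (G H : DiGraph V) (HV : Set V) (S : Finset V)
    (hpos : ∀ a b, G.Adj a b → 0 < G.len a b)
    (hsub : ∀ a b, H.Adj a b → G.Adj a b) (hlen : H.len = G.len)
    (hHVedge : ∀ a b, H.Adj a b → a ∈ HV ∧ b ∈ HV)
    (hS : S.Nonempty) (hSH : ↑S ⊆ HV)
    (q v : V) (hv : v ∈ HV) (hreach : ∃ l, G.IsWalk q v l)
    (hi : ∀ l, G.IsWalk q v l → ∃ s ∈ S, s ∈ l)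
    (hii : ∀ l, G.IsWalk q v l → ∀ l₁ s l₂, l = l₁ ++ s :: l₂ → s ∈ S →
      (∀ x ∈ l₂, x ∉ (S : Set V)) → H.IsWalk s v (s :: l₂))
    (ω : V → EReal) (hω : ∀ x, ω x = ((G.dist q x : ℝ≥0∞) : EReal))
    (P : List V) (hP : G.IsWalk q v P)
    (hPlen : ENNReal.ofReal (G.walkLen P) = G.dist q v)
    (hPuniq : ∀ l, G.IsWalk q v l → ENNReal.ofReal (G.walkLen l) = G.dist q v → l = P) :
    ∀ s ∈ S,
      (v ∈ DiGraph.Vor H HV S ω s ↔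
        ∃ l₁ l₂, P = l₁ ++ s :: l₂ ∧ ∀ x ∈ l₂, x ∉ (S : Set V)) ∧
      (v ∈ DiGraph.Vor H HV S ω s →
        DiGraph.dOm H ω s v = ((G.dist q v : ℝ≥0∞) : EReal)) :=
  stmt1_general G H HV S hpos hsub hlen q v hv hi hii ω hω P hP hPlen hPuniq
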